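/- For every integer N there exists an integer k > N such that α_k = ⌊2^{k+1}/π⌋ is odd; that is, the set of indices k ≥ 1 for which α_k is odd is infinite. -/

import Mathlib

open Real

/-- `α k = ⌊2 ^ (k + 1) / π⌋`, the integer part of `2 ^ (k + 1) / π`. -/
noncomputable def α (k : ℕ) : ℤ := ⌊(2 : ℝ) ^ (k + 1) / Real.pi⌋

private noncomputable def f (k : ℕ) : ℝ := Int.fract ((2 : ℝ) ^ (k + 1) / Real.pi)

private lemma irr (k : ℕ) : Irrational ((2 : ℝ) ^ (k + 1) / Real.pi) := by
  have h : Irrational (((2 ^ (k + 1) : ℕ) : ℝ) / Real.pi) :=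
    irrational_pi.natCast_div (by positivity)
  simpa using h

private lemma f_pos (k : ℕ) : 0 < f k := by
  rcases lt_or_eq_of_le (Int.fract_nonneg ((2 : ℝ) ^ (k + 1) / Real.pi)) with h | h
  · exact h
  · exfalso
    have hfl := Int.fract_add_floor ((2 : ℝ) ^ (k + 1) / Real.pi)
    rw [← h] at hfl
    exact (irr k).ne_int _ (by linarith)

private lemma f_lt_one (k : ℕ) : f k < 1 := Int.fract_lt_one _

private lemma two_pow_eq (k : ℕ) :
    (2 : ℝ) ^ (k + 1 + 1) / Real.pi = 2 * f k + ((2 * α k : ℤ) : ℝ) := by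
  have hsum : ((α k : ℝ)) + f k = (2 : ℝ) ^ (k + 1) / Real.pi :=
    Int.floor_add_fract _
  have h2 : (2 : ℝ) ^ (k + 1 + 1) / Real.pi = 2 * ((2 : ℝ) ^ (k + 1) / Real.pi) := by
    rw [pow_succ]; ring
  rw [h2, ← hsum]
  push_cast
  ring

private lemma key (k : ℕ) : α (k + 1) = 2 * α k + ⌊2 * f k⌋ := by
  have : α (k + 1) = ⌊(2 : ℝ) ^ (k + 1 + 1) / Real.pi⌋ := rfl
  rw [this, two_pow_eq, Int.floor_add_intCast]
  ring

private lemma exists_odd (N : ℕ) : ∃ k : ℕ, N < k ∧ Odd (α k) := by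
  by_contra h
  push_neg at h
  have heven : ∀ k, N < k → Even (α k) := fun k hk =>
    Int.not_odd_iff_even.mp (h k hk)
  have hstep : ∀ k, N < k → f (k + 1) = 2 * f k := by
    intro k hk
    have h1 : ⌊2 * f k⌋ = α (k + 1) - 2 * α k := by rw [key k]; ring
    have hnn : (0 : ℤ) ≤ ⌊2 * f k⌋ := Int.floor_nonneg.mpr (by linarith [f_pos k])
    have hlt : ⌊2 * f k⌋ < 2 := by
      have h2 : (2 : ℝ) * f k < 2 := by linarith [f_lt_one k]
      exact Int.floor_lt.mpr (by exact_mod_cast h2)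
    have heq : Even ⌊2 * f k⌋ := by
      rw [h1]
      exact (heven (k + 1) (by omega)).sub ((heven k hk).mul_left 2)
    have h0 : ⌊2 * f k⌋ = 0 := by
      rcases Int.even_iff.mp heq with h
      omega
    have hfk : 2 * f k < 1 := by
      by_contra hc
      push_neg at hc
      have : (1 : ℤ) ≤ ⌊2 * f k⌋ := Int.le_floor.mpr (by exact_mod_cast hc)
      omega
    have hf1 : f (k + 1) = Int.fract (2 * f k + ((2 * α k : ℤ) : ℝ)) := by
      show Int.fract _ = _
      rw [← two_pow_eq k]
    rw [hf1, Int.fract_add_intCast, Int.fract_eq_self.mpr ⟨by linarith [f_pos k], hfk⟩]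
  have hdouble : ∀ j : ℕ, f (N + 1 + j) = 2 ^ j * f (N + 1) := by
    intro j
    induction j with
    | zero => simp
    | succ n ih =>
      have := hstep (N + 1 + n) (by omega)
      rw [show N + 1 + (n + 1) = N + 1 + n + 1 by ring, this, ih, pow_succ]
      ring
  obtain ⟨j, hj⟩ := pow_unbounded_of_one_lt (1 / f (N + 1)) (by norm_num : (1:ℝ) < 2)
  have h1 : 1 < 2 ^ j * f (N + 1) := by
    rw [div_lt_iff₀ (f_pos (N + 1))] at hj
    linarith
  have := f_lt_one (N + 1 + j)
  rw [hdouble j] at this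
  linarith

/-- For every integer `N` there exists `k > N` with `α k` odd; that is, the set
of indices `k ≥ 1` for which `α k` is odd is infinite. -/
theorem exists_odd_alpha :
    (∀ N : ℕ, ∃ k : ℕ, N < k ∧ Odd (α k)) ∧
      {k : ℕ | 1 ≤ k ∧ Odd (α k)}.Infinite := by
  refine ⟨exists_odd, ?_⟩
  apply Set.infinite_of_not_bddAbove
  rintro ⟨b, hb⟩
  obtain ⟨k, hk, hodd⟩ := exists_odd b
  exact absurd (hb ⟨by omega, hodd⟩) (by omega)
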